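/- If t rewrites to u in one step of a constructor rewrite system R, G is a constructor-shared closed term graph with 𝕋(G) = t, then there exists a term graph I such that G rewrites to I in one step of the graph rewrite system corresponding to R and 𝕋(I) = u. -/

import Mathlib

/-- First-order terms over a signature with constructors `C` and function symbols `F`,
with variables drawn from ℕ. -/
inductive GTerm (C F : Type) : Type
  | var : ℕ → GTerm C F
  | con : C → List (GTerm C F) → GTerm C F
  | fn : F → List (GTerm C F) → GTerm C F

namespace GTerm

variable {C F : Type}

/-- Constructor terms: built only from constructors. -/
inductive IsConTerm : GTerm C F → Prop
  | con {c ts} : (∀ t ∈ ts, IsConTerm t) → IsConTerm (con c ts)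

/-- Patterns: built from constructors and variables. -/
inductive IsPattern : GTerm C F → Prop
  | var {x} : IsPattern (var x)
  | con {c ts} : (∀ t ∈ ts, IsPattern t) → IsPattern (con c ts)

/-- Arity discipline: every symbol is applied to as many arguments as its arity. -/
inductive WFT (arc : C → ℕ) (arf : F → ℕ) : GTerm C F → Prop
  | var {x} : WFT arc arf (var x)
  | con {c ts} : ts.length = arc c → (∀ t ∈ ts, WFT arc arf t) → WFT arc arf (con c ts)
  | fn {f ts} : ts.length = arf f → (∀ t ∈ ts, WFT arc arf t) → WFT arc arf (fn f ts)

/-- The list of variable occurrences of a term, in left-to-right order. -/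
def varsL : GTerm C F → List ℕ
  | var x => [x]
  | con _ ts => ts.attach.flatMap (fun t => varsL t.1)
  | fn _ ts => ts.attach.flatMap (fun t => varsL t.1)
decreasing_by
  all_goals simp_wf
  all_goals have := List.sizeOf_lt_of_mem t.2
  all_goals omega

/-- Substitution of terms for variables. -/
def gsubst (σ : ℕ → Option (GTerm C F)) : GTerm C F → GTerm C F
  | var y => (σ y).getD (var y)
  | con c ts => con c (ts.attach.map (fun t => gsubst σ t.1))
  | fn f ts => fn f (ts.attach.map (fun t => gsubst σ t.1))
decreasing_by
  all_goals simp_wf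
  all_goals have := List.sizeOf_lt_of_mem t.2
  all_goals omega

end GTerm

/-- A constructor rewrite rule f(p₁,…,pₙ) → rhs. -/
structure GRule (C F : Type) where
  f : F
  args : List (GTerm C F)
  rhs : GTerm C F

/-- Well-formedness of a rule: the lhs arguments are patterns respecting the
arities, the lhs is linear, and the rhs is a well-formed term all of whose
variables occur in the lhs. -/
def GRule.WF {C F : Type} (arc : C → ℕ) (arf : F → ℕ) (r : GRule C F) : Prop :=
  (∀ p ∈ r.args, GTerm.IsPattern p) ∧
  r.args.length = arf r.f ∧
  (∀ p ∈ r.args, GTerm.WFT arc arf p) ∧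
  (r.args.flatMap GTerm.varsL).Nodup ∧
  GTerm.WFT arc arf r.rhs ∧
  (∀ x ∈ r.rhs.varsL, x ∈ r.args.flatMap GTerm.varsL)

/-- Non-overlapping rules: the left-hand sides of distinct rules cannot be
instantiated (by constructor terms) to a common term. -/
def NonOverlapping {C F : Type} (Rs : Set (GRule C F)) : Prop :=
  ∀ r₁ ∈ Rs, ∀ r₂ ∈ Rs, r₁ ≠ r₂ → r₁.f = r₂.f →
    ¬ ∃ σ τ : ℕ → Option (GTerm C F),
        (∀ x t, σ x = some t → GTerm.IsConTerm t) ∧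
        (∀ x t, τ x = some t → GTerm.IsConTerm t) ∧
        r₁.args.map (GTerm.gsubst σ) = r₂.args.map (GTerm.gsubst τ)

/-- An orthogonal constructor rewrite system. -/
def Orthogonal {C F : Type} (arc : C → ℕ) (arf : F → ℕ) (Rs : Set (GRule C F)) : Prop :=
  (∀ r ∈ Rs, GRule.WF arc arf r) ∧ NonOverlapping Rs

/-- One-step (call-by-value) rewriting: a rule instantiated by constructor terms
fires, closed under arbitrary contexts. -/
inductive XStep {C F : Type} (Rs : Set (GRule C F)) : GTerm C F → GTerm C F → Prop
  | root {r : GRule C F} {σ : ℕ → Option (GTerm C F)} :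
      r ∈ Rs → (∀ x t, σ x = some t → GTerm.IsConTerm t) →
      XStep Rs (GTerm.fn r.f (r.args.map (GTerm.gsubst σ))) (GTerm.gsubst σ r.rhs)
  | conCtx {c ts₁ t t' ts₂} : XStep Rs t t' →
      XStep Rs (GTerm.con c (ts₁ ++ t :: ts₂)) (GTerm.con c (ts₁ ++ t' :: ts₂))
  | fnCtx {f ts₁ t t' ts₂} : XStep Rs t t' →
      XStep Rs (GTerm.fn f (ts₁ ++ t :: ts₂)) (GTerm.fn f (ts₁ ++ t' :: ts₂))

/-- Normal forms of the rewrite system. -/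
def XNormal {C F : Type} (Rs : Set (GRule C F)) (t : GTerm C F) : Prop :=
  ¬ ∃ u, XStep Rs t u

/-- Closed terms: no variables. -/
def GClosed {C F : Type} (t : GTerm C F) : Prop := t.varsL = []

open scoped Classical

/-- A term graph over a signature with constructors `C` and function symbols `F`:
a finite set of vertices (natural numbers), a partial labelling, an ordered list of
successors for every vertex (empty for unlabelled vertices), and a root. -/
structure TGraph (C F : Type) where
  V : Finset ℕ
  lab : ℕ → Option (C ⊕ F)
  succ : ℕ → List ℕ
  root : ℕ

namespace TGraph

variable {C F : Type}

/-- The arity of a symbol. -/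
def arity (arc : C → ℕ) (arf : F → ℕ) : C ⊕ F → ℕ := Sum.elim arc arf

/-- The edge relation of a graph. -/
def edge (G : TGraph C F) (a b : ℕ) : Prop := a ∈ G.V ∧ b ∈ G.succ a

/-- Reachability in a graph. -/
def Reach (G : TGraph C F) (a b : ℕ) : Prop := Relation.ReflTransGen G.edge a b

/-- Well-formed graphs: the root is a vertex, edges stay inside the vertex set,
the out-degree of every vertex matches the arity of its label (0 if unlabelled),
and the graph is acyclic. -/
structure WFG (arc : C → ℕ) (arf : F → ℕ) (G : TGraph C F) : Prop where
  root_mem : G.root ∈ G.V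
  succ_mem : ∀ v ∈ G.V, ∀ w ∈ G.succ v, w ∈ G.V
  arity_ok : ∀ v ∈ G.V, (G.succ v).length = ((G.lab v).map (arity arc arf)).getD 0
  acyclic : ∀ v, ¬ Relation.TransGen G.edge v v

/-- A graph is closed if its labelling is total on vertices. -/
def ClosedG (G : TGraph C F) : Prop := ∀ v ∈ G.V, (G.lab v).isSome

/-- Follow a path (a list of child indices) from a vertex. -/
def follow (G : TGraph C F) : ℕ → List ℕ → Option ℕ
  | v, [] => some v
  | v, i :: is => ((G.succ v)[i]?).bind (fun w => follow G w is)

/-- A graph is constructor-shared if every vertex reachable from the root by two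
distinct paths only reaches constructor-labelled vertices. -/
def ConstructorShared (G : TGraph C F) : Prop :=
  ∀ v (p q : List ℕ), follow G G.root p = some v → follow G G.root q = some v →
    p ≠ q → ∀ w, G.Reach v w → ∃ c, G.lab w = some (Sum.inl c)

/-- `Unfolds G v t`: the (closed) term `t` is the unfolding of the graph `G`
at vertex `v`. -/
inductive Unfolds (G : TGraph C F) : ℕ → GTerm C F → Prop
  | con {v : ℕ} {c : C} {ts : List (GTerm C F)} :
      G.lab v = some (Sum.inl c) → (G.succ v).length = ts.length →
      (∀ (j : ℕ) (h : j < ts.length), Unfolds G ((G.succ v).getD j 0) ts[j]) →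
      Unfolds G v (GTerm.con c ts)
  | fn {v : ℕ} {f : F} {ts : List (GTerm C F)} :
      G.lab v = some (Sum.inr f) → (G.succ v).length = ts.length →
      (∀ (j : ℕ) (h : j < ts.length), Unfolds G ((G.succ v).getD j 0) ts[j]) →
      Unfolds G v (GTerm.fn f ts)

/-- A homomorphism from the subgraph of `H` rooted at `l` into `G`. -/
def IsHom (H : TGraph C F) (l : ℕ) (G : TGraph C F) (φ : ℕ → ℕ) : Prop :=
  ∀ v, H.Reach l v → φ v ∈ G.V ∧
    ∀ a, H.lab v = some a →
      G.lab (φ v) = some a ∧ G.succ (φ v) = (H.succ v).map φ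

/-- A redex in `G` for a rule graph `(H, l, r)`: a homomorphism from the subgraph of
`H` rooted at `l` into `G` such that every path starting at the image of an
unlabelled (variable) node is a constructor path. -/
def IsRedex (H : TGraph C F) (l : ℕ) (G : TGraph C F) (φ : ℕ → ℕ) : Prop :=
  IsHom H l G φ ∧
  ∀ v, H.Reach l v → H.lab v = none →
    ∀ w, G.Reach (φ v) w → ∃ c, G.lab w = some (Sum.inl c)

/-- Firing a redex `(H, l, r, φ)` in `G`: the build phase copies the part of the
right-hand side subgraph not contained in the left-hand side subgraph (fresh
vertices are obtained by adding the offset `off`), the redirection phase redirects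
all edges pointing to `φ l` towards (the copy of) `r` and re-roots if necessary,
and the garbage-collection phase keeps only the vertices reachable from the new
root. -/
noncomputable def fire (G : TGraph C F) (H : TGraph C F) (l r : ℕ) (φ : ℕ → ℕ) :
    TGraph C F :=
  let off := G.V.sup id + 1
  let ψ : ℕ → ℕ := fun v => if H.Reach l v then φ v else v + off
  let tgt := ψ r
  let rd : ℕ → ℕ := fun w => if w = φ l then tgt else w
  let copies := (H.V.filter (fun v => H.Reach r v ∧ ¬ H.Reach l v)).image (· + off)
  let lab1 : ℕ → Option (C ⊕ F) :=
    fun v => if v ∈ copies then H.lab (v - off) else G.lab v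
  let succ1 : ℕ → List ℕ :=
    fun v => if v ∈ copies then ((H.succ (v - off)).map ψ).map rd
             else (G.succ v).map rd
  let root1 := rd G.root
  let V1 := G.V ∪ copies
  { V := V1.filter
      (fun v => Relation.ReflTransGen (fun a b => a ∈ V1 ∧ b ∈ succ1 a) root1 v),
    lab := lab1, succ := succ1, root := root1 }

end TGraph

/-- State of the tree-graph builder. -/
structure GB (C F : Type) where
  next : ℕ
  lab : ℕ → Option (C ⊕ F)
  succ : ℕ → List ℕ

mutual
/-- Build the tree of a term on top of a builder state, the (already allocated)
node `vm x` standing for the variable `x`; returns the root of the new tree. -/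
def buildT {C F : Type} (vm : ℕ → ℕ) : GTerm C F → GB C F → ℕ × GB C F
  | .var x, s => (vm x, s)
  | .con c ts, s =>
      let p := buildL vm ts s
      (p.2.next,
        ⟨p.2.next + 1,
         fun v => if v = p.2.next then some (Sum.inl c) else p.2.lab v,
         fun v => if v = p.2.next then p.1 else p.2.succ v⟩)
  | .fn f ts, s =>
      let p := buildL vm ts s
      (p.2.next,
        ⟨p.2.next + 1,
         fun v => if v = p.2.next then some (Sum.inr f) else p.2.lab v,
         fun v => if v = p.2.next then p.1 else p.2.succ v⟩)

def buildL {C F : Type} (vm : ℕ → ℕ) : List (GTerm C F) → GB C F → List ℕ × GB C F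
  | [], s => ([], s)
  | t :: ts, s =>
      let p := buildT vm t s
      let q := buildL vm ts p.2
      (p.1 :: q.1, q.2)
end

/-- The term graph of a term: one unlabelled node for each variable (shared), and
a fresh node for every other symbol occurrence.  For a closed term this is the
tree term graph 𝔾(t). -/
def graphOfTerm {C F : Type} (t : GTerm C F) : TGraph C F :=
  let vs := t.varsL.dedup
  let vm : ℕ → ℕ := fun x => vs.idxOf x
  let p := buildT vm t ⟨vs.length, fun _ => none, fun _ => []⟩
  { V := Finset.range p.2.next, lab := p.2.lab, succ := p.2.succ, root := p.1 }

/-- The graph rewrite rule corresponding to a term rewrite rule: the trees of the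
left- and right-hand sides, sharing the nodes representing the same variable.
Returns the rule graph together with its left and right roots. -/
def ruleGraph {C F : Type} (r : GRule C F) : TGraph C F × ℕ × ℕ :=
  let lhs : GTerm C F := GTerm.fn r.f r.args
  let vs := lhs.varsL.dedup
  let vm : ℕ → ℕ := fun x => vs.idxOf x
  let p := buildT vm lhs ⟨vs.length, fun _ => none, fun _ => []⟩
  let q := buildT vm r.rhs p.2
  ({ V := Finset.range q.2.next, lab := q.2.lab, succ := q.2.succ, root := p.1 },
   p.1, q.1)

/-- One-step graph rewriting in the graph rewrite system corresponding to the
rules `Rs`. -/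
inductive GStep {C F : Type} (Rs : Set (GRule C F)) : TGraph C F → TGraph C F → Prop
  | mk {G : TGraph C F} {r : GRule C F} {φ : ℕ → ℕ} :
      r ∈ Rs →
      TGraph.IsRedex (ruleGraph r).1 (ruleGraph r).2.1 G φ →
      GStep Rs G (TGraph.fire G (ruleGraph r).1 (ruleGraph r).2.1 (ruleGraph r).2.2 φ)

/-- Graph normal forms: no redex can be fired. -/
def GNormal {C F : Type} (Rs : Set (GRule C F)) (G : TGraph C F) : Prop :=
  ¬ ∃ I, GStep Rs G I


/-!
The step `t → u` rewrites at a position `p` an instance `lσ` of a left-hand side by constructor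
terms, and `p` leads in `G` to a vertex `w` unfolding to `lσ`. Because `l` is linear, the tree of
`l` in the rule graph maps homomorphically onto the subgraph at `w`, its variable vertices going to
vertices that unfold to the constructor terms `σ x`; this is a redex. Firing it builds a copy of the
right-hand side sharing the variable vertices with the image of `l`, so the copy unfolds to `rσ`.
Vertices from which `w` is unreachable keep their unfolding, and since `w` carries a function
symbol, constructor sharing makes `p` the only path from the root to `w`; hence redirecting the
edges into `w` changes the unfolding of the root exactly at position `p`.
-/

theorem List.getD_mem {α : Type*} {l : List α} {j : ℕ} (hj : j < l.length) (d : α) :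
    l.getD j d ∈ l := by
  rw [List.getD_eq_getElem _ d hj]; exact List.getElem_mem hj

theorem List.getD_map_of_lt {α β : Type*} (f : α → β) {l : List α} {j : ℕ} (hj : j < l.length)
    (d : α) (d' : β) : (l.map f).getD j d' = f (l.getD j d) := by
  rw [List.getD_eq_getElem _ _ (by simpa using hj), List.getD_eq_getElem _ _ hj, List.getElem_map]

theorem Set.PairwiseDisjoint.exists_glue {α β ι : Type*} {s : Set ι} {L : ι → Set α}
    (hL : s.PairwiseDisjoint L) (Φ : ι → α → β) (g : β) :
    ∃ φ : α → β, (∀ i ∈ s, ∀ u ∈ L i, φ u = Φ i u) ∧ ∀ u, (∀ i ∈ s, u ∉ L i) → φ u = g := by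
  classical
  refine ⟨fun u => if h : ∃ i ∈ s, u ∈ L i then Φ h.choose u else g, fun i hi u hu => ?_,
    fun u hu => dif_neg fun ⟨i, hi, hui⟩ => hu i hi hui⟩
  have h : ∃ i ∈ s, u ∈ L i := ⟨i, hi, hu⟩
  dsimp only
  rw [dif_pos h, hL.elim_set h.choose_spec.1 hi u h.choose_spec.2 hu]

namespace GTerm

variable {C F : Type}

def app : C ⊕ F → List (GTerm C F) → GTerm C F
  | .inl c, ts => con c ts
  | .inr f, ts => fn f ts

@[simp] theorem varsL_var (x : ℕ) : (var x : GTerm C F).varsL = [x] := by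
  simp [varsL]

theorem varsL_fn (f : F) (ts : List (GTerm C F)) : (fn f ts).varsL = ts.flatMap varsL := by
  rw [varsL]; simp

theorem varsL_app (a : C ⊕ F) (ts : List (GTerm C F)) :
    (app a ts).varsL = ts.flatMap varsL := by
  cases a <;> (rw [app, varsL]; simp)

theorem mem_flatMap_varsL {ts : List (GTerm C F)} {j : ℕ} (hj : j < ts.length) {x : ℕ}
    (hx : x ∈ ts[j].varsL) : x ∈ ts.flatMap varsL :=
  List.mem_flatMap.2 ⟨_, List.getElem_mem hj, hx⟩

theorem mem_varsL_app {a : C ⊕ F} {ts : List (GTerm C F)} {j : ℕ} (hj : j < ts.length)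
    {x : ℕ} (hx : x ∈ ts[j].varsL) : x ∈ (app a ts).varsL :=
  varsL_app a ts ▸ mem_flatMap_varsL hj hx

theorem gsubst_var (σ : ℕ → Option (GTerm C F)) (x : ℕ) :
    gsubst σ (var x) = (σ x).getD (var x) := by
  simp [gsubst]

theorem gsubst_fn (σ : ℕ → Option (GTerm C F)) (f : F) (ts : List (GTerm C F)) :
    gsubst σ (fn f ts) = fn f (ts.map (gsubst σ)) := by
  rw [gsubst]; simp

theorem gsubst_app (σ : ℕ → Option (GTerm C F)) (a : C ⊕ F) (ts : List (GTerm C F)) :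
    gsubst σ (app a ts) = app a (ts.map (gsubst σ)) := by
  cases a <;> (rw [app, gsubst]; simp [app])

/-- `ReplAt s s' p t t'`: the subterm of `t` at position `p` is `s`, and replacing it by `s'`
yields `t'`. -/
inductive ReplAt (s s' : GTerm C F) : List ℕ → GTerm C F → GTerm C F → Prop
  | here : ReplAt s s' [] s s'
  | arg {a : C ⊕ F} {ts : List (GTerm C F)} {i : ℕ} {p : List ℕ} {t' : GTerm C F}
      (hi : i < ts.length) :
      ReplAt s s' p ts[i] t' → ReplAt s s' (i :: p) (app a ts) (app a (ts.set i t'))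

theorem ReplAt.append_cons {s s' t t' : GTerm C F} {p : List ℕ} (h : ReplAt s s' p t t')
    (a : C ⊕ F) (ts₁ ts₂ : List (GTerm C F)) :
    ReplAt s s' (ts₁.length :: p) (app a (ts₁ ++ t :: ts₂)) (app a (ts₁ ++ t' :: ts₂)) := by
  have hi : ts₁.length < (ts₁ ++ t :: ts₂).length := by simp
  have := ReplAt.arg (a := a) hi (by simpa using h)
  simpa [List.set_append_right] using this

theorem _root_.XStep.exists_replAt {Rs : Set (GRule C F)} {t u : GTerm C F}
    (h : XStep Rs t u) :
    ∃ r ∈ Rs, ∃ σ : ℕ → Option (GTerm C F), (∀ x c, σ x = some c → IsConTerm c) ∧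
      ∃ p, ReplAt (gsubst σ (fn r.f r.args)) (gsubst σ r.rhs) p t u := by
  induction h with
  | root hr hσ => exact ⟨_, hr, _, hσ, [], by rw [gsubst_fn]; exact .here⟩
  | @conCtx c ts₁ _ _ ts₂ _ ih =>
    obtain ⟨r, hr, σ, hσ, p, hp⟩ := ih
    exact ⟨r, hr, σ, hσ, _, hp.append_cons (.inl c) ts₁ ts₂⟩
  | @fnCtx f ts₁ _ _ ts₂ _ ih =>
    obtain ⟨r, hr, σ, hσ, p, hp⟩ := ih
    exact ⟨r, hr, σ, hσ, _, hp.append_cons (.inr f) ts₁ ts₂⟩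

end GTerm

namespace TGraph

open GTerm

variable {C F : Type}

def SuccClosed (G : TGraph C F) : Prop := ∀ v ∈ G.V, ∀ w ∈ G.succ v, w ∈ G.V

theorem follow_cons (G : TGraph C F) (v i : ℕ) (p : List ℕ) :
    G.follow v (i :: p) = (G.succ v)[i]?.bind (G.follow · p) := rfl

theorem mem_of_follow {G : TGraph C F} (hG : G.SuccClosed) :
    ∀ {p : List ℕ} {v w : ℕ}, v ∈ G.V → G.follow v p = some w → w ∈ G.V
  | [], _, _, hv, h => by cases h; exact hv
  | i :: p, v, w, hv, h => by
    obtain ⟨b, hb, hfol⟩ := Option.bind_eq_some_iff.1 h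
    exact mem_of_follow hG (hG v hv b (List.mem_of_getElem? hb)) hfol

theorem exists_follow_of_reach {G : TGraph C F} {v w : ℕ} (h : G.Reach v w) :
    ∃ p, G.follow v p = some w := by
  induction h using Relation.ReflTransGen.head_induction_on with
  | refl => exact ⟨[], rfl⟩
  | head hedge _ ih =>
    obtain ⟨p, hp⟩ := ih
    obtain ⟨i, hi, rfl⟩ := List.getElem_of_mem hedge.2
    exact ⟨i :: p, by rw [follow_cons, List.getElem?_eq_getElem hi]; exact hp⟩

theorem Unfolds.app {G : TGraph C F} {v : ℕ} {a : C ⊕ F} {ts : List (GTerm C F)}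
    (hlab : G.lab v = some a) (hlen : (G.succ v).length = ts.length)
    (hargs : ∀ (j : ℕ) (h : j < ts.length), G.Unfolds ((G.succ v).getD j 0) ts[j]) :
    G.Unfolds v (GTerm.app a ts) := by
  cases a
  · exact .con hlab hlen hargs
  · exact .fn hlab hlen hargs

theorem unfolds_app_iff {G : TGraph C F} {v : ℕ} {a : C ⊕ F} {ts : List (GTerm C F)} :
    G.Unfolds v (GTerm.app a ts) ↔ G.lab v = some a ∧ (G.succ v).length = ts.length ∧
      ∀ (j : ℕ) (h : j < ts.length), G.Unfolds ((G.succ v).getD j 0) ts[j] := by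
  refine ⟨fun h => ?_, fun ⟨hlab, hlen, hargs⟩ => .app hlab hlen hargs⟩
  cases a <;> cases h <;> exact ⟨‹_›, ‹_›, ‹_›⟩

theorem Unfolds.lab_fn {G : TGraph C F} {v : ℕ} {f : F} {ts : List (GTerm C F)}
    (h : G.Unfolds v (GTerm.fn f ts)) : G.lab v = some (.inr f) :=
  (unfolds_app_iff (a := .inr f)).1 h |>.1

theorem not_unfolds_var (G : TGraph C F) (v x : ℕ) : ¬ G.Unfolds v (var x) := nofun

@[elab_as_elim]
theorem Unfolds.induction_app {G : TGraph C F}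
    {motive : (v : ℕ) → (t : GTerm C F) → G.Unfolds v t → Prop}
    (app : ∀ (v : ℕ) (a : C ⊕ F) (ts : List (GTerm C F)) (hlab : G.lab v = some a)
      (hlen : (G.succ v).length = ts.length)
      (hargs : ∀ (j : ℕ) (h : j < ts.length), G.Unfolds ((G.succ v).getD j 0) ts[j]),
      (∀ (j : ℕ) (h : j < ts.length), motive ((G.succ v).getD j 0) ts[j] (hargs j h)) →
      motive v (GTerm.app a ts) (.app hlab hlen hargs))
    {v : ℕ} {t : GTerm C F} (h : G.Unfolds v t) : motive v t h := by
  induction h with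
  | @con v c ts hlab hlen hargs ih => exact app v (.inl c) ts hlab hlen hargs ih
  | @fn v f ts hlab hlen hargs ih => exact app v (.inr f) ts hlab hlen hargs ih

theorem Unfolds.exists_follow_of_replAt {G : TGraph C F} {s s' t t' : GTerm C F}
    {p : List ℕ} (hrepl : ReplAt s s' p t t') :
    ∀ {v : ℕ}, G.Unfolds v t → ∃ w, G.follow v p = some w ∧ G.Unfolds w s := by
  induction hrepl with
  | here => exact fun h => ⟨_, rfl, h⟩
  | @arg a ts i p _ hi _ ih =>
    intro v h
    obtain ⟨-, hlen, hargs⟩ := unfolds_app_iff.1 h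
    obtain ⟨w, hw, hws⟩ := ih (hargs i hi)
    refine ⟨w, ?_, hws⟩
    rwa [follow_cons, List.getElem?_eq_getElem (hlen ▸ hi), Option.bind_some,
      ← List.getD_eq_getElem _ 0]

theorem Unfolds.lab_inl_of_reach {G : TGraph C F} {v : ℕ} {s : GTerm C F}
    (hs : IsConTerm s) (h : G.Unfolds v s) {w : ℕ} (hw : G.Reach v w) :
    ∃ c, G.lab w = some (Sum.inl c) := by
  induction hs generalizing v with
  | @con c ts _ ih =>
    obtain ⟨hlab, hlen, hargs⟩ := unfolds_app_iff (a := .inl c).1 h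
    rcases hw.cases_head with rfl | ⟨b, ⟨-, hb⟩, hbw⟩
    · exact ⟨c, hlab⟩
    obtain ⟨j, hj, rfl⟩ := List.getElem_of_mem hb
    have hj' : j < ts.length := hlen ▸ hj
    exact ih _ (List.getElem_mem hj') (by rw [← List.getD_eq_getElem _ 0]; exact hargs j hj') hbw

theorem Unfolds.of_gsubst_var {G : TGraph C F} {σ : ℕ → Option (GTerm C F)} {v x : ℕ}
    (h : G.Unfolds v (gsubst σ (var x))) : ∃ c, σ x = some c ∧ G.Unfolds v c := by
  rw [gsubst_var] at h
  cases hx : σ x with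
  | none => rw [hx] at h; exact absurd h (not_unfolds_var G v x)
  | some c => rw [hx] at h; exact ⟨c, rfl, h⟩

end TGraph

/-- `TreeRep lab succ vm t v S`: in the labelled graph `(lab, succ)`, the vertex `v` is the root
of a copy of the tree of `t` with vertex set `S`, in which all occurrences of a variable `x` are
represented by the single unlabelled vertex `vm x`. -/
inductive TreeRep {C F : Type} (lab : ℕ → Option (C ⊕ F)) (succ : ℕ → List ℕ) (vm : ℕ → ℕ) :
    GTerm C F → ℕ → Finset ℕ → Prop
  | var {x : ℕ} : lab (vm x) = none → succ (vm x) = [] →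
      TreeRep lab succ vm (.var x) (vm x) {vm x}
  | app {a : C ⊕ F} {ts : List (GTerm C F)} {v : ℕ} {L : ℕ → Finset ℕ} :
      lab v = some a → (succ v).length = ts.length →
      (∀ (j : ℕ) (h : j < ts.length), TreeRep lab succ vm ts[j] ((succ v).getD j 0) (L j)) →
      (∀ j < ts.length, v ∉ L j) →
      (∀ i j, i < j → j < ts.length → ∀ u ∈ L i, u ∈ L j → lab u = none) →
      TreeRep lab succ vm (GTerm.app a ts) v (insert v ((Finset.range ts.length).biUnion L))

namespace TreeRep

open GTerm

variable {C F : Type} {lab : ℕ → Option (C ⊕ F)} {succ : ℕ → List ℕ} {vm : ℕ → ℕ}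
  {t : GTerm C F} {v : ℕ} {S : Finset ℕ}

theorem mem_app_iff {ts : List (GTerm C F)} {L : ℕ → Finset ℕ} {u : ℕ} :
    u ∈ insert v ((Finset.range ts.length).biUnion L) ↔ u = v ∨ ∃ j < ts.length, u ∈ L j := by
  simp

theorem root_mem (h : TreeRep lab succ vm t v S) : v ∈ S := by
  cases h <;> simp

theorem succ_mem (h : TreeRep lab succ vm t v S) : ∀ u ∈ S, ∀ b ∈ succ u, b ∈ S := by
  induction h with
  | var _ hsucc => simp [hsucc]
  | app _ hlen hargs _ _ ih =>
    intro u hu b hb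
    rw [mem_app_iff] at hu ⊢
    right
    rcases hu with rfl | ⟨j, hj, hu⟩
    · obtain ⟨j, hj', rfl⟩ := List.getElem_of_mem hb
      refine ⟨j, hlen ▸ hj', ?_⟩
      rw [← List.getD_eq_getElem _ 0]
      exact (hargs j (hlen ▸ hj')).root_mem
    · exact ⟨j, hj, ih j hj u hu b hb⟩

theorem exists_var_of_lab_eq_none (h : TreeRep lab succ vm t v S) :
    ∀ u ∈ S, lab u = none → ∃ x ∈ t.varsL, u = vm x := by
  induction h with
  | @var x _ _ => intro u hu _; exact ⟨x, by simp, by simpa using hu⟩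
  | app hlab _ _ _ _ ih =>
    intro u hu hnone
    rcases mem_app_iff.1 hu with rfl | ⟨j, hj, hu⟩
    · simp [hlab] at hnone
    · obtain ⟨x, hx, rfl⟩ := ih j hj u hu hnone
      exact ⟨x, mem_varsL_app hj hx, rfl⟩

theorem var_mem (h : TreeRep lab succ vm t v S) : ∀ x ∈ t.varsL, vm x ∈ S := by
  induction h with
  | var => simp
  | app _ _ _ _ _ ih =>
    intro x hx
    rw [varsL_app, List.mem_flatMap] at hx
    obtain ⟨s, hs, hxs⟩ := hx
    obtain ⟨j, hj, rfl⟩ := List.getElem_of_mem hs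
    exact mem_app_iff.2 (.inr ⟨j, hj, ih j hj x hxs⟩)

theorem mono {lab' : ℕ → Option (C ⊕ F)} {succ' : ℕ → List ℕ}
    (h : TreeRep lab succ vm t v S) (hagree : ∀ u ∈ S, lab' u = lab u ∧ succ' u = succ u) :
    TreeRep lab' succ' vm t v S := by
  induction h with
  | var hlab hsucc =>
    have := hagree _ (Finset.mem_singleton_self _)
    exact .var (this.1.trans hlab) (this.2.trans hsucc)
  | app hlab hlen _ hroot hshared ih =>
    have hv := hagree _ (Finset.mem_insert_self _ _)
    have hsub : ∀ j < _, ∀ u ∈ _, lab' u = lab u ∧ succ' u = succ u := fun j hj u hu =>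
      hagree u (mem_app_iff.2 (.inr ⟨j, hj, hu⟩))
    refine .app (hv.1.trans hlab) (hv.2 ▸ hlen) (fun j hj => hv.2 ▸ ih j hj (hsub j hj)) hroot
      fun i j hij hj u hui huj => ((hsub i (hij.trans hj) u hui).1.trans
        (hshared i j hij hj u hui huj))

theorem reach_iff {H : TGraph C F} (h : TreeRep H.lab H.succ vm t v S) (hS : ∀ u ∈ S, u ∈ H.V)
    {u : ℕ} : H.Reach v u ↔ u ∈ S := by
  refine ⟨fun hu => ?_, fun hu => ?_⟩
  · induction hu with
    | refl => exact h.root_mem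
    | tail _ hedge ih => exact h.succ_mem _ ih _ hedge.2
  · induction h with
    | var => exact Finset.mem_singleton.1 hu ▸ .refl
    | app _ hlen hargs _ _ ih =>
      rcases mem_app_iff.1 hu with rfl | ⟨j, hj, hu⟩
      · exact .refl
      refine .head ⟨hS _ (Finset.mem_insert_self _ _), ?_⟩ (ih j hj (fun w hw => hS w
        (mem_app_iff.2 (.inr ⟨j, hj, hw⟩))) hu)
      exact List.getD_mem (hlen ▸ hj) 0

end TreeRep

namespace GB

open GTerm

variable {C F : Type}

def Extends (s s' : GB C F) : Prop :=
  s.next ≤ s'.next ∧ ∀ u < s.next, s'.lab u = s.lab u ∧ s'.succ u = s.succ u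

theorem Extends.refl (s : GB C F) : s.Extends s := ⟨le_rfl, fun _ _ => ⟨rfl, rfl⟩⟩

theorem Extends.trans {s₁ s₂ s₃ : GB C F} (h₁₂ : s₁.Extends s₂) (h₂₃ : s₂.Extends s₃) :
    s₁.Extends s₃ :=
  ⟨h₁₂.1.trans h₂₃.1, fun u hu =>
    ⟨(h₂₃.2 u (lt_of_lt_of_le hu h₁₂.1)).1.trans (h₁₂.2 u hu).1,
      (h₂₃.2 u (lt_of_lt_of_le hu h₁₂.1)).2.trans (h₁₂.2 u hu).2⟩⟩

def IsVarNode (s : GB C F) (u : ℕ) : Prop := u < s.next ∧ s.lab u = none ∧ s.succ u = []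

theorem Extends.isVarNode {s s' : GB C F} (h : s.Extends s') {u : ℕ} (hu : s.IsVarNode u) :
    s'.IsVarNode u :=
  ⟨lt_of_lt_of_le hu.1 h.1, (h.2 u hu.1).1.trans hu.2.1, (h.2 u hu.1).2.trans hu.2.2⟩

def Builds (vm : ℕ → ℕ) (s s' : GB C F) (t : GTerm C F) (v : ℕ) : Prop :=
  s.Extends s' ∧ ∃ S, TreeRep s'.lab s'.succ vm t v S ∧
    ∀ u ∈ S, u < s'.next ∧ (u < s.next → s.lab u = none)

def BuildsList (vm : ℕ → ℕ) (s s' : GB C F) (ts : List (GTerm C F)) (vs : List ℕ) : Prop :=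
  s.Extends s' ∧ vs.length = ts.length ∧ ∃ Ls : List (Finset ℕ),
    (∀ (j : ℕ) (h : j < ts.length), TreeRep s'.lab s'.succ vm ts[j] (vs.getD j 0) (Ls.getD j ∅) ∧
      ∀ u ∈ Ls.getD j ∅, u < s'.next ∧ (u < s.next → s.lab u = none)) ∧
    ∀ i j, i < j → j < ts.length → ∀ u ∈ Ls.getD i ∅, u ∈ Ls.getD j ∅ → s'.lab u = none

theorem buildsList_nil (vm : ℕ → ℕ) (s : GB C F) : BuildsList vm s s [] [] :=
  ⟨.refl s, rfl, [], nofun, nofun⟩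

theorem BuildsList.cons {vm : ℕ → ℕ} {s₁ s₂ s₃ : GB C F} {t : GTerm C F} {ts : List (GTerm C F)}
    {v : ℕ} {vs : List ℕ} (ht : Builds vm s₁ s₂ t v) (hts : BuildsList vm s₂ s₃ ts vs) :
    BuildsList vm s₁ s₃ (t :: ts) (v :: vs) := by
  obtain ⟨h₁₂, S, hS, hSfresh⟩ := ht
  obtain ⟨h₂₃, hlen, Ls, hLs, hshared⟩ := hts
  refine ⟨h₁₂.trans h₂₃, by simpa using hlen, S :: Ls, fun j hj => ?_,
    fun i j hij hj u hui huj => ?_⟩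
  · cases j with
    | zero =>
      refine ⟨hS.mono fun u hu => h₂₃.2 u (hSfresh u hu).1, fun u hu => ?_⟩
      exact ⟨lt_of_lt_of_le (hSfresh u hu).1 h₂₃.1, (hSfresh u hu).2⟩
    | succ j =>
      obtain ⟨hj₁, hj₂⟩ := hLs j (by simpa using hj)
      refine ⟨by simpa using hj₁, fun u hu => ⟨(hj₂ u hu).1, fun hu₁ => ?_⟩⟩
      have hu₂ : u < s₂.next := lt_of_lt_of_le hu₁ h₁₂.1
      rw [← (h₁₂.2 u hu₁).1]
      exact (hj₂ u (by simpa using hu)).2 hu₂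
  · obtain _ | j := j
    · exact absurd hij (Nat.not_lt_zero i)
    have hj' : j < ts.length := by simpa using hj
    obtain _ | i := i
    · -- a vertex of the first tree lies below `s₂.next`, so in a later tree it is an old vertex
      have hu₂ : u < s₂.next := (hSfresh u hui).1
      rw [(h₂₃.2 u hu₂).1]
      exact (hLs j hj').2 u (by simpa using huj) |>.2 hu₂
    · exact hshared i j (by omega) hj' u (by simpa using hui) (by simpa using huj)

theorem BuildsList.app {vm : ℕ → ℕ} {s s' : GB C F} {ts : List (GTerm C F)} {vs : List ℕ}
    (h : BuildsList vm s s' ts vs) (a : C ⊕ F) :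
    Builds vm s ⟨s'.next + 1, fun v => if v = s'.next then some a else s'.lab v,
      fun v => if v = s'.next then vs else s'.succ v⟩ (app a ts) s'.next := by
  obtain ⟨hext, hlen, Ls, hLs, hshared⟩ := h
  have hold : ∀ j < ts.length, ∀ u ∈ Ls.getD j ∅, u ≠ s'.next := fun j hj u hu =>
    ((hLs j hj).2 u hu).1.ne
  refine ⟨⟨by have := hext.1; simp only; omega, fun u hu => ?_⟩,
    insert s'.next ((Finset.range ts.length).biUnion fun j => Ls.getD j ∅),
    .app (by simp) (by simpa using hlen)
    (fun j hj => ?_) (fun j hj hmem => hold j hj _ hmem rfl) (fun i j hij hj u hui huj => ?_),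
    fun u hu => ?_⟩
  · have hne : u ≠ s'.next := by have := hext.1; omega
    simpa [hne] using hext.2 u hu
  · simp only [if_pos]
    exact (hLs j hj).1.mono fun u hu => by simp [hold j hj u hu]
  · simpa [hold i (hij.trans hj) u hui] using hshared i j hij hj u hui huj
  · rcases TreeRep.mem_app_iff.1 hu with rfl | ⟨j, hj, hu⟩
    · exact ⟨by simp, fun hlt => absurd hext.1 (by simp at hlt ⊢; omega)⟩
    · exact ⟨by have := ((hLs j hj).2 u hu).1; simp; omega, ((hLs j hj).2 u hu).2⟩

mutual

theorem builds_buildT (vm : ℕ → ℕ) (t : GTerm C F) (s : GB C F)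
    (hvm : ∀ x ∈ t.varsL, s.IsVarNode (vm x)) :
    Builds vm s (buildT vm t s).2 t (buildT vm t s).1 := by
  cases t with
  | var x =>
    obtain ⟨hlt, hlab, hsucc⟩ := hvm x (by simp)
    exact ⟨.refl s, {vm x}, .var hlab hsucc, by simpa using ⟨hlt, fun _ => hlab⟩⟩
  | con c ts =>
    exact (buildsList_buildL vm ts s fun x hx => hvm x (by rwa [← varsL_app (.inl c)] at hx)).app
      (.inl c)
  | fn f ts =>
    exact (buildsList_buildL vm ts s fun x hx => hvm x (by rwa [← varsL_app (.inr f)] at hx)).app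
      (.inr f)

theorem buildsList_buildL (vm : ℕ → ℕ) (ts : List (GTerm C F)) (s : GB C F)
    (hvm : ∀ x ∈ ts.flatMap varsL, s.IsVarNode (vm x)) :
    BuildsList vm s (buildL vm ts s).2 ts (buildL vm ts s).1 := by
  cases ts with
  | nil => exact buildsList_nil vm s
  | cons t ts =>
    have ht := builds_buildT vm t s fun x hx => hvm x (by simp [hx])
    exact BuildsList.cons ht
      (buildsList_buildL vm ts _ fun x hx => ht.1.isVarNode (hvm x (by simp_all)))

end

end GB

section RuleGraph

open GTerm GB

variable {C F : Type}

theorem ruleGraph_spec (r : GRule C F) (hvars : ∀ x ∈ r.rhs.varsL, x ∈ r.args.flatMap varsL) :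
    ∃ (vm : ℕ → ℕ) (Sl Sr : Finset ℕ),
      TreeRep (ruleGraph r).1.lab (ruleGraph r).1.succ vm (fn r.f r.args) (ruleGraph r).2.1 Sl ∧
      TreeRep (ruleGraph r).1.lab (ruleGraph r).1.succ vm r.rhs (ruleGraph r).2.2 Sr ∧
      (∀ u ∈ Sl, u ∈ (ruleGraph r).1.V) ∧ (∀ u ∈ Sr, u ∈ (ruleGraph r).1.V) ∧
      Set.InjOn vm {x | x ∈ (fn r.f r.args).varsL} ∧
      ∀ u ∈ Sr, ((ruleGraph r).1.lab u).isSome → u ∉ Sl := by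
  set vs := (fn r.f r.args).varsL.dedup
  set vm : ℕ → ℕ := fun x => vs.idxOf x
  set s₀ : GB C F := ⟨vs.length, fun _ => none, fun _ => []⟩
  have h₀ : ∀ x ∈ (fn r.f r.args).varsL, s₀.IsVarNode (vm x) := fun x hx =>
    ⟨List.idxOf_lt_length_iff.2 (List.mem_dedup.2 hx), rfl, rfl⟩
  obtain ⟨hP, Sl, hSl, hSlf⟩ := builds_buildT vm (fn r.f r.args) s₀ h₀
  set P := buildT vm (fn r.f r.args) s₀
  obtain ⟨hQ, Sr, hSr, hSrf⟩ := builds_buildT vm r.rhs P.2 fun x hx =>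
    hP.isVarNode (h₀ x (by rw [varsL_fn]; exact hvars x hx))
  refine ⟨vm, Sl, Sr, hSl.mono fun u hu => hQ.2 u (hSlf u hu).1, hSr,
    fun u hu => Finset.mem_range.2 ((hSlf u hu).1.trans_le hQ.1),
    fun u hu => Finset.mem_range.2 (hSrf u hu).1,
    fun x hx y _ hxy => (List.idxOf_inj (List.mem_dedup.2 hx)).1 hxy, fun u hu hsome hul => ?_⟩
  -- a vertex shared by both trees is old when the right-hand side is built, hence unlabelled
  have hold : u < P.2.next := (hSlf u hul).1
  have hnone : (ruleGraph r).1.lab u = none := (hQ.2 u hold).1.trans ((hSrf u hu).2 hold)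
  simp [hnone] at hsome

end RuleGraph

namespace TreeRep

open GTerm

variable {C F : Type} {lab : ℕ → Option (C ⊕ F)} {succ : ℕ → List ℕ} {vm : ℕ → ℕ}

-- A vertex shared by two argument subtrees would represent a variable occurring in both.
theorem pairwiseDisjoint_args {ts : List (GTerm C F)} {rs : ℕ → ℕ} {L : ℕ → Finset ℕ}
    (hargs : ∀ (j : ℕ) (h : j < ts.length), TreeRep lab succ vm ts[j] (rs j) (L j))
    (hshared : ∀ i j, i < j → j < ts.length → ∀ u ∈ L i, u ∈ L j → lab u = none)
    (hlin : (ts.flatMap varsL).Nodup) (hinj : Set.InjOn vm {x | x ∈ ts.flatMap varsL}) :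
    (Set.Iio ts.length).PairwiseDisjoint fun j => (L j : Set ℕ) := by
  have hsep : ∀ i j, i < j → j < ts.length → ∀ u ∈ L i, u ∉ L j := by
    intro i j hij hj u hui huj
    have hnone := hshared i j hij hj u hui huj
    obtain ⟨x, hx, rfl⟩ := (hargs i (hij.trans hj)).exists_var_of_lab_eq_none _ hui hnone
    obtain ⟨y, hy, hxy⟩ := (hargs j hj).exists_var_of_lab_eq_none _ huj hnone
    rw [hinj (mem_flatMap_varsL (hij.trans hj) hx) (mem_flatMap_varsL hj hy) hxy] at hx
    exact List.disjoint_left.1 (List.pairwise_iff_getElem.1 (List.nodup_flatMap.1 hlin).2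
      i j (hij.trans hj) hj hij) hx hy
  refine Set.pairwiseDisjoint_iff.2 fun i hi j hj ⟨u, hui, huj⟩ => ?_
  by_contra hne
  rcases Nat.lt_or_gt_of_ne hne with hij | hji
  · exact hsep i j hij hj u hui huj
  · exact hsep j i hji hi u huj hui

def Matches (lab : ℕ → Option (C ⊕ F)) (succ : ℕ → List ℕ) (vm : ℕ → ℕ) (G : TGraph C F)
    (σ : ℕ → Option (GTerm C F)) (s : GTerm C F) (S : Finset ℕ) (φ : ℕ → ℕ) : Prop :=
  (∀ u ∈ S, φ u ∈ G.V ∧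
    ∀ a, lab u = some a → G.lab (φ u) = some a ∧ G.succ (φ u) = (succ u).map φ) ∧
  ∀ x ∈ s.varsL, G.Unfolds (φ (vm x)) (gsubst σ (.var x))

theorem matches_congr {G : TGraph C F} {σ : ℕ → Option (GTerm C F)} {s : GTerm C F} {v : ℕ}
    {S : Finset ℕ} {φ ψ : ℕ → ℕ} (htr : TreeRep lab succ vm s v S)
    (hψ : Matches lab succ vm G σ s S ψ) (hφψ : ∀ u ∈ S, φ u = ψ u) :
    Matches lab succ vm G σ s S φ := by
  refine ⟨fun u hu => ?_, fun x hx => hφψ _ (htr.var_mem x hx) ▸ hψ.2 x hx⟩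
  obtain ⟨hV, hhom⟩ := hψ.1 u hu
  refine ⟨hφψ u hu ▸ hV, fun a ha => ?_⟩
  rw [hφψ u hu, List.map_congr_left fun b hb => hφψ b (htr.succ_mem u hu b hb)]
  exact hhom a ha

theorem exists_matches_app {G : TGraph C F} {σ : ℕ → Option (GTerm C F)} {a : C ⊕ F}
    {ts : List (GTerm C F)} {v g : ℕ} {L : ℕ → Finset ℕ} (hlab : lab v = some a)
    (hlen : (succ v).length = ts.length)
    (hargs : ∀ (j : ℕ) (h : j < ts.length), TreeRep lab succ vm ts[j] ((succ v).getD j 0) (L j))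
    (hroot : ∀ j < ts.length, v ∉ L j)
    (hL : (Set.Iio ts.length).PairwiseDisjoint fun j => (L j : Set ℕ))
    (hg : g ∈ G.V) (hlabG : G.lab g = some a) (hlenG : (G.succ g).length = ts.length)
    (Φ : ℕ → ℕ → ℕ) (hΦ : ∀ (j : ℕ) (hj : j < ts.length),
      Φ j ((succ v).getD j 0) = (G.succ g).getD j 0 ∧ Matches lab succ vm G σ ts[j] (L j) (Φ j)) :
    ∃ φ : ℕ → ℕ, φ v = g ∧
      Matches lab succ vm G σ (GTerm.app a ts)
        (insert v ((Finset.range ts.length).biUnion L)) φ := by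
  obtain ⟨φ, hφL, hφout⟩ := hL.exists_glue Φ g
  have hφv : φ v = g := hφout v hroot
  have hargs' : ∀ (j : ℕ) (hj : j < ts.length), Matches lab succ vm G σ ts[j] (L j) φ := fun j hj =>
    (hargs j hj).matches_congr (hΦ j hj).2 (hφL j hj)
  refine ⟨φ, hφv, fun u hu => ?_, fun x hx => ?_⟩
  · rcases mem_app_iff.1 hu with rfl | ⟨j, hj, hu⟩
    · refine ⟨hφv ▸ hg, fun a' ha' => ?_⟩
      obtain rfl : a = a' := Option.some.inj (hlab ▸ ha')
      refine ⟨hφv ▸ hlabG, hφv ▸ List.ext_getElem (by simp [hlen, hlenG]) fun j h₁ h₂ => ?_⟩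
      have hj : j < ts.length := hlenG ▸ h₁
      rw [List.getElem_map, ← List.getD_eq_getElem (succ u) 0, ← List.getD_eq_getElem _ 0 h₁,
        hφL j hj _ (hargs j hj).root_mem, (hΦ j hj).1]
    · exact (hargs' j hj).1 u hu
  · obtain ⟨t, ht, hxt⟩ := List.mem_flatMap.1 (varsL_app a ts ▸ hx)
    obtain ⟨j, hj, rfl⟩ := List.getElem_of_mem ht
    exact (hargs' j hj).2 x hxt

theorem exists_matches {G : TGraph C F} (hG : G.SuccClosed) {σ : ℕ → Option (GTerm C F)}
    {s : GTerm C F} {v : ℕ} {S : Finset ℕ} (htr : TreeRep lab succ vm s v S)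
    (hlin : s.varsL.Nodup) (hinj : Set.InjOn vm {x | x ∈ s.varsL}) {g : ℕ} (hg : g ∈ G.V)
    (hunf : G.Unfolds g (gsubst σ s)) :
    ∃ φ : ℕ → ℕ, φ v = g ∧ Matches lab succ vm G σ s S φ := by
  induction htr generalizing g with
  | @var x hlab _ =>
    refine ⟨fun _ => g, rfl, fun u hu => ⟨hg, fun a ha => ?_⟩, fun y hy => ?_⟩
    · rw [Finset.mem_singleton.1 hu, hlab] at ha; cases ha
    · obtain rfl : y = x := by simpa using hy
      exact hunf
  | @app a ts v L hlab hlen hargs hroot hshared ih =>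
    simp only [varsL_app] at hlin hinj
    rw [gsubst_app, TGraph.unfolds_app_iff] at hunf
    obtain ⟨hlabG, hlenG, hunfG⟩ := hunf
    rw [List.length_map] at hlenG
    have hchild : ∀ j, ∃ Φ : ℕ → ℕ, ∀ hj : j < ts.length,
        Φ ((succ v).getD j 0) = (G.succ g).getD j 0 ∧ Matches lab succ vm G σ ts[j] (L j) Φ := by
      intro j
      by_cases hj : j < ts.length
      · obtain ⟨Φ, h⟩ := ih j hj ((List.nodup_flatMap.1 hlin).1 _ (List.getElem_mem hj))
          (fun x hx y hy => hinj (mem_flatMap_varsL hj hx) (mem_flatMap_varsL hj hy))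
          (hG g hg _ (List.getD_mem (hlenG ▸ hj) 0))
          (by have := hunfG j (by simpa using hj); rwa [List.getElem_map] at this)
        exact ⟨Φ, fun _ => h⟩
      · exact ⟨id, fun h => absurd h hj⟩
    choose Φ hΦ using hchild
    exact exists_matches_app hlab hlen hargs hroot
      (pairwiseDisjoint_args hargs hshared hlin hinj) hg hlabG hlenG Φ hΦ

end TreeRep

namespace TGraph

open GTerm

variable {C F : Type}

-- `fireOffset`, `fireEmbed` and `fireRedirect` are `off`, `ψ` and `rd` in the definition of `fire`.

noncomputable def fireOffset (G : TGraph C F) : ℕ := G.V.sup id + 1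

noncomputable def fireEmbed (G H : TGraph C F) (l : ℕ) (φ : ℕ → ℕ) (v : ℕ) : ℕ :=
  if H.Reach l v then φ v else v + G.fireOffset

noncomputable def fireRedirect (G H : TGraph C F) (l r : ℕ) (φ : ℕ → ℕ) (w : ℕ) : ℕ :=
  if w = φ l then fireEmbed G H l φ r else w

variable {G H : TGraph C F} {l r : ℕ} {φ : ℕ → ℕ}

theorem lt_fireOffset {v : ℕ} (hv : v ∈ G.V) : v < G.fireOffset :=
  Nat.lt_succ_of_le (Finset.le_sup (f := id) hv)

theorem fire_lab_of_mem {v : ℕ} (hv : v ∈ G.V) : (fire G H l r φ).lab v = G.lab v := by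
  refine if_neg fun hcopy => ?_
  obtain ⟨u, -, rfl⟩ := Finset.mem_image.1 hcopy
  exact absurd (lt_fireOffset hv) (Nat.not_lt.2 (Nat.le_add_left _ _))

theorem fire_succ_of_mem {v : ℕ} (hv : v ∈ G.V) :
    (fire G H l r φ).succ v = (G.succ v).map (fireRedirect G H l r φ) := by
  refine if_neg fun hcopy => ?_
  obtain ⟨u, -, rfl⟩ := Finset.mem_image.1 hcopy
  exact absurd (lt_fireOffset hv) (Nat.not_lt.2 (Nat.le_add_left _ _))

theorem fire_lab_copy {v : ℕ} (hv : v ∈ H.V) (hr : H.Reach r v) (hl : ¬ H.Reach l v) :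
    (fire G H l r φ).lab (v + G.fireOffset) = H.lab v := by
  refine (if_pos (Finset.mem_image.2 ⟨v, Finset.mem_filter.2 ⟨hv, hr, hl⟩, rfl⟩)).trans ?_
  rw [show v + G.fireOffset - (G.V.sup id + 1) = v from Nat.add_sub_cancel _ _]

theorem fire_succ_copy {v : ℕ} (hv : v ∈ H.V) (hr : H.Reach r v) (hl : ¬ H.Reach l v) :
    (fire G H l r φ).succ (v + G.fireOffset) =
      ((H.succ v).map (fireEmbed G H l φ)).map (fireRedirect G H l r φ) := by
  refine (if_pos (Finset.mem_image.2 ⟨v, Finset.mem_filter.2 ⟨hv, hr, hl⟩, rfl⟩)).trans ?_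
  rw [show v + G.fireOffset - (G.V.sup id + 1) = v from Nat.add_sub_cancel _ _]
  rfl

theorem Unfolds.fire_of_not_reach (hG : G.SuccClosed) {v : ℕ} {s : GTerm C F}
    (h : G.Unfolds v s) (hv : v ∈ G.V) (hnr : ¬ G.Reach v (φ l)) :
    (fire G H l r φ).Unfolds v s := by
  induction h using Unfolds.induction_app with
  | app v a ts hlab hlen _ ih =>
    have hsucc : (fire G H l r φ).succ v = G.succ v := by
      rw [fire_succ_of_mem hv]
      refine (List.map_congr_left fun b hb => if_neg ?_).trans (List.map_id _)
      rintro rfl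
      exact hnr (.single ⟨hv, hb⟩)
    refine .app ((fire_lab_of_mem hv).trans hlab) (hsucc ▸ hlen) fun j hj => hsucc ▸ ih j hj ?_ ?_
    · exact hG v hv _ (List.getD_mem (hlen ▸ hj) 0)
    · exact fun h => hnr (.head ⟨hv, List.getD_mem (hlen ▸ hj) 0⟩ h)

theorem unfolds_fire_embed (hG : G.SuccClosed) {f : F} (hφl : φ l ∈ G.V)
    (hf : G.lab (φ l) = some (.inr f)) {σ : ℕ → Option (GTerm C F)}
    (hσ : ∀ x c, σ x = some c → IsConTerm c) {vm : ℕ → ℕ} {s : GTerm C F} {v : ℕ}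
    {S : Finset ℕ} (htr : TreeRep H.lab H.succ vm s v S)
    (hcopy : ∀ u ∈ S, (H.lab u).isSome → u ∈ H.V ∧ H.Reach r u ∧ ¬ H.Reach l u)
    (hvar : ∀ x ∈ s.varsL,
      H.Reach l (vm x) ∧ φ (vm x) ∈ G.V ∧ G.Unfolds (φ (vm x)) (gsubst σ (.var x))) :
    fireEmbed G H l φ v ≠ φ l ∧
      (fire G H l r φ).Unfolds (fireEmbed G H l φ v) (gsubst σ s) := by
  induction htr with
  | @var x _ _ =>
    obtain ⟨hl, hV, hunf⟩ := hvar x (by simp)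
    obtain ⟨c, hc, hunfc⟩ := hunf.of_gsubst_var
    have hnr : ¬ G.Reach (φ (vm x)) (φ l) := fun h => by
      obtain ⟨c', hc'⟩ := hunfc.lab_inl_of_reach (hσ x c hc) h
      exact Sum.inr_ne_inl (Option.some.inj (hf.symm.trans hc'))
    rw [fireEmbed, if_pos hl, gsubst_var, hc, Option.getD_some]
    exact ⟨fun h => hnr (h ▸ .refl), hunfc.fire_of_not_reach hG hV hnr⟩
  | @app a ts v L hlab hlen hargs _ _ ih =>
    obtain ⟨hv, hr, hl⟩ := hcopy v (Finset.mem_insert_self _ _) (by simp [hlab])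
    rw [fireEmbed, if_neg hl, gsubst_app]
    refine ⟨((lt_fireOffset hφl).trans_le (Nat.le_add_left _ _)).ne',
      .app ((fire_lab_copy hv hr hl).trans hlab) (by simp [fire_succ_copy hv hr hl, hlen])
        fun j hj => ?_⟩
    have hj' : j < ts.length := by simpa using hj
    obtain ⟨hne, hunf⟩ := ih j hj'
      (fun u hu => hcopy u (TreeRep.mem_app_iff.2 (.inr ⟨j, hj', hu⟩)))
      (fun x hx => hvar x (mem_varsL_app hj' hx))
    rw [fire_succ_copy hv hr hl, List.getD_map_of_lt _ (by simpa [hlen]) _ 0,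
      List.getD_map_of_lt _ (hlen ▸ hj') _ 0, fireRedirect, if_neg hne, List.getElem_map]
    exact hunf

theorem unfolds_fire_of_replAt (hG : G.SuccClosed) {s s' : GTerm C F}
    (htgt : (fire G H l r φ).Unfolds (fireEmbed G H l φ r) s') {p : List ℕ} {t t' : GTerm C F}
    (hrepl : ReplAt s s' p t t') {v : ℕ} (hv : v ∈ G.V) (hfol : G.follow v p = some (φ l))
    (huniq : ∀ q, G.follow v q = some (φ l) → q = p) (ht : G.Unfolds v t) :
    (fire G H l r φ).Unfolds (fireRedirect G H l r φ v) t' := by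
  induction hrepl generalizing v with
  | here =>
    obtain rfl : v = φ l := Option.some.inj hfol
    rwa [fireRedirect, if_pos rfl]
  | @arg a ts i p t'' hi _ ih =>
    have hvl : v ≠ φ l := fun he => List.cons_ne_nil i p (huniq [] (congrArg some he)).symm
    rw [fireRedirect, if_neg hvl]
    obtain ⟨hlab, hlen, hargs⟩ := unfolds_app_iff.1 ht
    have hsucc : (fire G H l r φ).succ v = (G.succ v).map (fireRedirect G H l r φ) :=
      fire_succ_of_mem hv
    refine .app ((fire_lab_of_mem hv).trans hlab) (by simp [hsucc, hlen]) fun j hj => ?_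
    have hj' : j < ts.length := by simpa using hj
    have hjs : j < (G.succ v).length := hlen ▸ hj'
    have hfol_j : ∀ q, G.follow v (j :: q) = G.follow ((G.succ v).getD j 0) q := fun q => by
      rw [follow_cons, List.getElem?_eq_getElem hjs, Option.bind_some, List.getD_eq_getElem _ 0]
    have hbV := hG v hv _ (List.getD_mem hjs 0)
    rw [hsucc, List.getD_map_of_lt _ hjs _ 0]
    by_cases hji : j = i
    · subst hji
      rw [List.getElem_set_self]
      exact ih hbV ((hfol_j p).symm.trans hfol)
        (fun q hq => (List.cons.inj (huniq (j :: q) ((hfol_j q).trans hq))).2) (hargs j hj')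
    · rw [List.getElem_set_ne (Ne.symm hji)]
      have hnr : ¬ G.Reach ((G.succ v).getD j 0) (φ l) := fun hre => by
        obtain ⟨q, hq⟩ := exists_follow_of_reach hre
        exact hji (List.cons.inj (huniq (j :: q) ((hfol_j q).trans hq))).1
      rw [fireRedirect, if_neg fun (he : _ = φ l) => hnr (he ▸ .refl)]
      exact (hargs j hj').fire_of_not_reach hG hbV hnr

end TGraph

section Redex

open GTerm TGraph

variable {C F : Type}

theorem exists_redex_of_unfolds_lhs {G : TGraph C F} (hG : G.SuccClosed) {r : GRule C F}
    (hlin : (r.args.flatMap varsL).Nodup) (hvars : ∀ x ∈ r.rhs.varsL, x ∈ r.args.flatMap varsL)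
    {σ : ℕ → Option (GTerm C F)} (hσ : ∀ x c, σ x = some c → IsConTerm c) {w : ℕ}
    (hw : w ∈ G.V) (hunf : G.Unfolds w (gsubst σ (fn r.f r.args))) :
    ∃ φ : ℕ → ℕ, φ (ruleGraph r).2.1 = w ∧ IsRedex (ruleGraph r).1 (ruleGraph r).2.1 G φ ∧
      (fire G (ruleGraph r).1 (ruleGraph r).2.1 (ruleGraph r).2.2 φ).Unfolds
        (fireEmbed G (ruleGraph r).1 (ruleGraph r).2.1 φ (ruleGraph r).2.2) (gsubst σ r.rhs) := by
  obtain ⟨vm, Sl, Sr, hSl, hSr, hSlV, hSrV, hinj, hshared⟩ := ruleGraph_spec r hvars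
  have hf : G.lab w = some (.inr r.f) := by rw [gsubst_fn] at hunf; exact hunf.lab_fn
  obtain ⟨φ, rfl, hhom, hvarφ⟩ := hSl.exists_matches hG (by rwa [varsL_fn]) hinj hw hunf
  have hreach : ∀ {u}, (ruleGraph r).1.Reach (ruleGraph r).2.1 u ↔ u ∈ Sl := hSl.reach_iff hSlV
  have hlhs : ∀ x ∈ r.rhs.varsL, x ∈ (fn r.f r.args).varsL := fun x hx => by
    rw [varsL_fn]; exact hvars x hx
  refine ⟨φ, rfl, ⟨fun v hv => hhom v (hreach.1 hv), fun v hv hnone u hu => ?_⟩,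
    (unfolds_fire_embed hG hw hf hσ hSr
      (fun u hu hsome => ⟨hSrV u hu, (hSr.reach_iff hSrV).2 hu,
        fun h => hshared u hu hsome (hreach.1 h)⟩)
      (fun x hx => ⟨hreach.2 (hSl.var_mem x (hlhs x hx)), (hhom _ (hSl.var_mem x (hlhs x hx))).1,
        hvarφ x (hlhs x hx)⟩)).2⟩
  obtain ⟨x, hx, rfl⟩ := hSl.exists_var_of_lab_eq_none v (hreach.1 hv) hnone
  obtain ⟨c, hc, hunfc⟩ := (hvarφ x hx).of_gsubst_var
  exact hunfc.lab_inl_of_reach (hσ x c hc) hu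

end Redex

/-- If t rewrites to u in one step of an orthogonal constructor rewrite system and
G is a closed, constructor-shared term graph unfolding to t, then G rewrites in one
step of the corresponding graph rewrite system to a graph I unfolding to u. -/
theorem graph_step_complete {C F : Type} (arc : C → ℕ) (arf : F → ℕ)
    (Rs : Set (GRule C F)) (horth : Orthogonal arc arf Rs)
    (t u : GTerm C F) (G : TGraph C F)
    (hstep : XStep Rs t u)
    (hwf : TGraph.WFG arc arf G) (hcl : TGraph.ClosedG G)
    (hcs : TGraph.ConstructorShared G)
    (ht : TGraph.Unfolds G G.root t) :
    ∃ I : TGraph C F, GStep Rs G I ∧ TGraph.Unfolds I I.root u := by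
  obtain ⟨r, hr, σ, hσ, p, hrepl⟩ := hstep.exists_replAt
  obtain ⟨w, hfol, hw⟩ := ht.exists_follow_of_replAt hrepl
  obtain ⟨-, -, -, hlin, -, hvars⟩ := horth.1 r hr
  have hf : G.lab w = some (.inr r.f) := by rw [GTerm.gsubst_fn] at hw; exact hw.lab_fn
  obtain ⟨φ, rfl, hredex, hrhs⟩ := exists_redex_of_unfolds_lhs hwf.succ_mem hlin hvars hσ
    (TGraph.mem_of_follow hwf.succ_mem hwf.root_mem hfol) hw
  -- the redex vertex is labelled by a function symbol, so constructor sharing makes `p` the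
  -- only path to it
  have huniq : ∀ q, G.follow G.root q = some (φ (ruleGraph r).2.1) → q = p := fun q hq => by
    by_contra hne
    obtain ⟨c, hc⟩ := hcs _ q p hq hfol hne _ .refl
    exact Sum.inr_ne_inl (Option.some.inj (hf.symm.trans hc))
  exact ⟨_, .mk hr hredex,
    TGraph.unfolds_fire_of_replAt hwf.succ_mem hrhs hrepl hwf.root_mem hfol huniq ht⟩
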